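/- Let x be a uniformly distributed unit vector on the sphere S², and let λ be a unit vector on S² whose conditional density given x is |λ·x|/(2π) with respect to the uniform surface measure. Then the marginal distribution of λ is uniform on the sphere, and the mutual information I(x:λ) equals 1 − 1/(2 ln 2) ≈ 0.278 bits. -/

import Mathlib

open Real MeasureTheory Metric

/-- the unit sphere S² in ℝ³ -/
abbrev S2 : Set (EuclideanSpace ℝ (Fin 3)) := sphere (0 : EuclideanSpace ℝ (Fin 3)) 1

/-- the Euclidean inner product of two points of S² -/
noncomputable def dotS2 (x l : S2) : ℝ :=
  inner ℝ (x : EuclideanSpace ℝ (Fin 3)) (l : EuclideanSpace ℝ (Fin 3))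

/-- the uniform probability measure on S²: the surface measure
(obtained from Lebesgue measure via `Measure.toSphere`, of total mass 4π)
normalized by 1/(4π). -/
noncomputable def unifS2 : Measure S2 :=
  (ENNReal.ofReal (4 * Real.pi))⁻¹ •
    (volume : Measure (EuclideanSpace ℝ (Fin 3))).toSphere

/-!
Under the surface measure `σ` of `S²`, the inner product `⟪ω, v⟫` with a unit vector `v` is
distributed as `2π` times Lebesgue measure on `[-1, 1]` (Archimedes' hat-box theorem). Both
integrals of the statement therefore reduce to `∫₋₁¹ 2|u| du = 2` and
`∫₋₁¹ 2|u| log₂ (2|u|) du = 2 - 1 / ln 2`.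

For the hat-box theorem, compute `∫_{‖x‖ ≤ 1} f (x₂ / ‖x‖) dx` in two ways: polar coordinates give
`(1/3) ∫ f (ω₂) dσ`, while cylindrical coordinates around the `x₂`-axis (polar coordinates in the
plane, then `r = √(s² + t²)`, then `t = r u`) give `(2π/3) ∫₋₁¹ f`. The reflection exchanging `v`
and the third basis vector preserves `σ`, which reduces a general `v` to the coordinate `x₂`.
-/

open Set Filter
open scoped Pointwise BoundedContinuousFunction RealInnerProductSpace

section Rotation

variable {E : Type*} [NormedAddCommGroup E] [NormedSpace ℝ E]

def LinearIsometryEquiv.restrictSphere (e : E ≃ₗᵢ[ℝ] E) :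
    sphere (0 : E) 1 → sphere (0 : E) 1 :=
  fun ω => ⟨e ω, by simp⟩

@[simp] lemma LinearIsometryEquiv.coe_restrictSphere (e : E ≃ₗᵢ[ℝ] E) (ω : sphere (0 : E) 1) :
    (e.restrictSphere ω : E) = e ω := rfl

lemma LinearIsometryEquiv.continuous_restrictSphere (e : E ≃ₗᵢ[ℝ] E) :
    Continuous e.restrictSphere :=
  (e.continuous.comp continuous_subtype_val).subtype_mk _

variable [MeasurableSpace E] [BorelSpace E]

lemma MeasureTheory.Measure.map_restrictSphere_toSphere (μ : Measure E) (e : E ≃ₗᵢ[ℝ] E)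
    (he : MeasurePreserving e μ μ) : μ.toSphere.map e.restrictSphere = μ.toSphere := by
  ext s hs
  have hpre : MeasurableSet (e.restrictSphere ⁻¹' s) := e.continuous_restrictSphere.measurable hs
  rw [Measure.map_apply e.continuous_restrictSphere.measurable hs, Measure.toSphere_apply' _ hs,
    Measure.toSphere_apply' _ hpre]
  have hcone : Ioo (0 : ℝ) 1 • ((↑) '' (e.restrictSphere ⁻¹' s) : Set E) =
      e ⁻¹' (Ioo (0 : ℝ) 1 • ((↑) '' s)) := by
    ext x
    simp only [Set.mem_smul, mem_image, mem_preimage]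
    constructor
    · rintro ⟨c, hc, _, ⟨ω, hω, rfl⟩, rfl⟩
      exact ⟨c, hc, _, ⟨_, hω, rfl⟩, by simp⟩
    · rintro ⟨c, hc, _, ⟨ω, hω, rfl⟩, hx⟩
      refine ⟨c, hc, _, ⟨e.symm.restrictSphere ω, ?_, rfl⟩, ?_⟩
      · convert hω using 1
        ext
        simp
      · simpa using congr_arg e.symm hx
  rw [hcone, he.measure_preimage_emb e.toHomeomorph.measurableEmbedding]

end Rotation

lemma MeasureTheory.Measure.integral_volumeIoiPow (n : ℕ) (g : ℝ → ℝ) :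
    ∫ r, g r ∂Measure.volumeIoiPow n = ∫ r in Ioi (0 : ℝ), r ^ n * g r := by
  rw [Measure.volumeIoiPow, integral_withDensity_eq_integral_toReal_smul
      (measurable_subtype_coe.pow_const n).ennreal_ofReal (by simp),
    integral_subtype_comap measurableSet_Ioi (fun r => (ENNReal.ofReal (r ^ n)).toReal • g r)]
  refine setIntegral_congr_fun measurableSet_Ioi fun r hr => ?_
  simp [ENNReal.toReal_ofReal (pow_nonneg (le_of_lt hr) n)]

section Polar

variable {E : Type*} [NormedAddCommGroup E] [NormedSpace ℝ E] [FiniteDimensional ℝ E]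
  [MeasurableSpace E] [BorelSpace E] [Nontrivial E]

lemma MeasureTheory.Measure.integral_comp_smul_inv_norm_mul (μ : Measure E) [μ.IsAddHaarMeasure]
    (F : E → ℝ) (g : ℝ → ℝ) :
    ∫ x, F (‖x‖⁻¹ • x) * g ‖x‖ ∂μ =
      (∫ ω : sphere (0 : E) 1, F ω ∂μ.toSphere) *
        ∫ r in Ioi (0 : ℝ), r ^ (Module.finrank ℝ E - 1) * g r := by
  rw [← integral_volumeIoiPow, ← integral_prod_mul,
    ← (μ.measurePreserving_homeomorphUnitSphereProd).integral_comp
      (Homeomorph.measurableEmbedding _)]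
  simp only [homeomorphUnitSphereProd_apply_fst_coe, homeomorphUnitSphereProd_apply_snd_coe]
  exact (restrict_compl_singleton (μ := μ) 0 ▸
    integral_subtype_comap (measurableSet_singleton _).compl (fun x => F (‖x‖⁻¹ • x) * g ‖x‖)).symm

end Polar

section Substitution

variable {F : Type*} [NormedAddCommGroup F] [NormedSpace ℝ F]

lemma image_sqrt_sq_add_sq_Ioi (t : ℝ) : (fun s => √(s ^ 2 + t ^ 2)) '' Ioi 0 = Ioi |t| := by
  ext r
  simp only [mem_image, mem_Ioi]
  constructor
  · rintro ⟨s, hs, rfl⟩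
    rw [← sqrt_sq_eq_abs]
    exact sqrt_lt_sqrt (sq_nonneg t) (by nlinarith)
  · intro hr
    have ht : t ^ 2 < r ^ 2 := sq_lt_sq.mpr (by rwa [abs_of_pos ((abs_nonneg t).trans_lt hr)])
    refine ⟨√(r ^ 2 - t ^ 2), sqrt_pos.mpr (by linarith), ?_⟩
    rw [sq_sqrt (by linarith), sub_add_cancel, sqrt_sq (by linarith [abs_nonneg t])]

lemma integral_Ioi_mul_comp_sqrt_sq_add_sq (G : ℝ → F) (t : ℝ) :
    ∫ s in Ioi 0, s • G √(s ^ 2 + t ^ 2) = ∫ r in Ioi |t|, r • G r := by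
  have hderiv : ∀ s ∈ Ioi (0 : ℝ), HasDerivWithinAt (fun s => √(s ^ 2 + t ^ 2))
      (s / √(s ^ 2 + t ^ 2)) (Ioi 0) s := fun s hs => by
    have hpos : s ^ 2 + t ^ 2 ≠ 0 := by have : (0 : ℝ) < s := hs; positivity
    refine (((hasDerivAt_pow 2 s).add_const (t ^ 2)).sqrt hpos).hasDerivWithinAt.congr_deriv ?_
    norm_num
    field_simp
  have hinj : InjOn (fun s => √(s ^ 2 + t ^ 2)) (Ioi 0) := fun a ha b hb hab => by
    have := (sqrt_inj (by positivity) (by positivity)).mp hab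
    exact (pow_left_inj₀ (le_of_lt ha) (le_of_lt hb) two_ne_zero).mp (by linarith)
  rw [← image_sqrt_sq_add_sq_Ioi, integral_image_eq_integral_abs_deriv_smul measurableSet_Ioi
    hderiv hinj]
  refine setIntegral_congr_fun measurableSet_Ioi fun s (hs : 0 < s) => ?_
  have hR : 0 < √(s ^ 2 + t ^ 2) := sqrt_pos.mpr (by positivity)
  rw [smul_smul, abs_of_pos (div_pos hs hR), div_mul_cancel₀ _ hR.ne']

end Substitution

local notation "ℝ³" => EuclideanSpace ℝ (Fin 3)
local notation "ℝ²" => EuclideanSpace ℝ (Fin 2)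

noncomputable def EuclideanSpace.finThreeEquivProd : ℝ³ ≃ᵐ ℝ × ℝ² :=
  ((MeasurableEquiv.toLp 2 _).symm.trans (MeasurableEquiv.piFinSuccAbove (fun _ => ℝ) 2)).trans
    (MeasurableEquiv.prodCongr (MeasurableEquiv.refl ℝ) (MeasurableEquiv.toLp 2 _))

namespace EuclideanSpace

lemma measurePreserving_finThreeEquivProd : MeasurePreserving finThreeEquivProd :=
  (((volume_preserving_symm_measurableEquiv_toLp (Fin 3)).trans
    (volume_preserving_piFinSuccAbove (fun _ => ℝ) 2)).trans
    ((MeasurePreserving.id volume).prod (PiLp.volume_preserving_toLp (Fin 2))))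

lemma norm_eq_sqrt_finThreeEquivProd (x : ℝ³) :
    ‖x‖ = √(‖(finThreeEquivProd x).2‖ ^ 2 + x 2 ^ 2) := by
  rw [EuclideanSpace.norm_eq x, EuclideanSpace.norm_sq_eq, Fin.sum_univ_three, Fin.sum_univ_two]
  simp [finThreeEquivProd, MeasurableEquiv.prodCongr, Fin.removeNth, add_assoc]
  rfl

lemma integral_fin_three_eq_integral_cylinder (H : ℝ → ℝ → ℝ)
    (hH : Integrable fun x : ℝ³ => H (x 2) ‖x‖) :
    ∫ x : ℝ³, H (x 2) ‖x‖ = 2 * π * ∫ t, ∫ r in Ioi |t|, r * H t r := by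
  let G : ℝ × ℝ² → ℝ := fun p => H p.1 √(‖p.2‖ ^ 2 + p.1 ^ 2)
  have hG : ∀ x : ℝ³, H (x 2) ‖x‖ = G (finThreeEquivProd x) := fun x => by
    rw [norm_eq_sqrt_finThreeEquivProd x]
    rfl
  have hGint : Integrable G (volume.prod volume) :=
    (measurePreserving_finThreeEquivProd.integrable_comp_emb
      finThreeEquivProd.measurableEmbedding).mp (by simpa only [Function.comp_def, ← hG] using hH)
  have hslice : ∀ t, ∫ y : ℝ², G (t, y) = 2 * π * ∫ r in Ioi |t|, r * H t r := fun t => by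
    have hsubst := integral_Ioi_mul_comp_sqrt_sq_add_sq (H t) t
    simp only [smul_eq_mul] at hsubst
    rw [integral_fun_norm_addHaar volume (fun s => H t √(s ^ 2 + t ^ 2)), ← hsubst,
      finrank_euclideanSpace_fin, measureReal_def, volume_ball_fin_two]
    simp only [ENNReal.ofReal_one, one_pow, one_mul, ENNReal.toReal_ofReal pi_pos.le,
      Nat.add_one_sub_one, pow_one, smul_eq_mul, nsmul_eq_mul, Nat.cast_ofNat, mul_assoc]
  calc ∫ x : ℝ³, H (x 2) ‖x‖ = ∫ p : ℝ × ℝ², G p := by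
        simp only [hG, measurePreserving_finThreeEquivProd.integral_comp']
    _ = ∫ t, ∫ y : ℝ², G (t, y) := integral_prod G hGint
    _ = 2 * π * ∫ t, ∫ r in Ioi |t|, r * H t r := by
        simp only [hslice, integral_const_mul]

end EuclideanSpace

/-- The unit-ball integrand `f (x₂ / ‖x‖)` in the coordinates `t = x₂`, `r = ‖x‖`, with the
cylindrical Jacobian `r`. -/
noncomputable def triangleIntegrand (f : ℝ → ℝ) (p : ℝ × ℝ) : ℝ :=
  if |p.1| < p.2 ∧ p.2 ≤ 1 then p.2 * f (p.1 / p.2) else 0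

lemma integrable_triangleIntegrand (f : ℝ →ᵇ ℝ) :
    Integrable (triangleIntegrand f) (volume.prod volume) := by
  have hsupp : ∀ p ∉ Icc (-1) 1 ×ˢ Icc 0 1, triangleIntegrand f p = 0 := by
    rintro ⟨t, r⟩ hp
    refine if_neg fun ⟨htr, hr⟩ => hp ⟨abs_le.mp (by linarith), by linarith [abs_nonneg t], hr⟩
  have hbound : ∀ p, ‖triangleIntegrand f p‖ ≤ ‖f‖ := by
    rintro ⟨t, r⟩
    unfold triangleIntegrand
    split_ifs with h
    · have hr : 0 ≤ r := (abs_nonneg t).trans h.1.le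
      rw [norm_mul, norm_of_nonneg hr]
      exact (mul_le_mul h.2 (f.norm_coe_le_norm _) (norm_nonneg _) zero_le_one).trans_eq (one_mul _)
    · simp
  have hmeas : Measurable (triangleIntegrand f) :=
    Measurable.ite ((measurableSet_lt (f := fun p : ℝ × ℝ => |p.1|) (by fun_prop)
      measurable_snd).inter (measurableSet_le measurable_snd measurable_const))
      (measurable_snd.mul (f.continuous.measurable.comp (by fun_prop))) measurable_const
  refine IntegrableOn.integrable_of_forall_notMem_eq_zero ?_ hsupp
  exact Measure.integrableOn_of_bounded (isCompact_Icc.prod isCompact_Icc).measure_lt_top.ne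
    hmeas.aestronglyMeasurable (.of_forall hbound)

lemma integral_triangleIntegrand_slice (f : ℝ → ℝ) (r : ℝ) :
    ∫ t, triangleIntegrand f (t, r) = (Ioc 0 1).indicator (· ^ 2) r * ∫ u in -1..1, f u := by
  by_cases hr : r ∈ Ioc 0 1
  · have hslice : (fun t => triangleIntegrand f (t, r)) =
        (Ioo (-r) r).indicator fun t => r * f (t / r) := by
      ext t
      simp only [triangleIntegrand, indicator_apply, mem_Ioo, ← abs_lt, hr.2, and_true]
    rw [hslice, integral_indicator measurableSet_Ioo, ← integral_Ioc_eq_integral_Ioo,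
      ← intervalIntegral.integral_of_le (by linarith [hr.1]), intervalIntegral.integral_const_mul,
      intervalIntegral.integral_comp_div _ hr.1.ne', indicator_of_mem hr]
    simp [neg_div, div_self hr.1.ne']
    ring
  · have hzero : ∀ t, triangleIntegrand f (t, r) = 0 := fun t =>
      if_neg fun h => hr ⟨(abs_nonneg t).trans_lt h.1, h.2⟩
    simp [hzero, hr]

lemma integral_integral_triangleIntegrand (f : ℝ →ᵇ ℝ) :
    ∫ t, ∫ r, triangleIntegrand f (t, r) = (∫ u in -1..1, f u) / 3 := by
  rw [integral_integral_swap (f := fun t r => triangleIntegrand f (t, r))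
    (integrable_triangleIntegrand f)]
  simp only [integral_triangleIntegrand_slice, integral_mul_const, integral_indicator measurableSet_Ioc,
    ← intervalIntegral.integral_of_le zero_le_one, integral_pow]
  ring

lemma EuclideanSpace.integral_comp_coord_div_norm_mul_indicator (f : ℝ →ᵇ ℝ) :
    ∫ x : ℝ³, f (x 2 / ‖x‖) * (Iic 1).indicator 1 ‖x‖ = 2 * π / 3 * ∫ u in -1..1, f u := by
  have hball :
      (fun x : ℝ³ => (Iic 1).indicator (1 : ℝ → ℝ) ‖x‖) = (closedBall 0 1).indicator 1 := by
    ext x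
    simp [Set.indicator]
  have hint : Integrable fun x : ℝ³ => f (x 2 / ‖x‖) * (Iic 1).indicator 1 ‖x‖ := by
    refine Integrable.bdd_mul ?_ (f.continuous.measurable.comp (by fun_prop)).aestronglyMeasurable
      (.of_forall fun _ => f.norm_coe_le_norm _)
    rw [hball, integrable_indicator_iff measurableSet_closedBall]
    exact integrableOn_const measure_closedBall_lt_top.ne
  have hslice : ∀ t, ∫ r in Ioi |t|, r * (f (t / r) * (Iic 1).indicator 1 r) =
      ∫ r, triangleIntegrand f (t, r) := fun t => by
    rw [← integral_indicator measurableSet_Ioi]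
    congr with r
    by_cases h1 : |t| < r <;> by_cases h2 : r ≤ 1 <;> simp [triangleIntegrand, h1, h2]
  rw [integral_fin_three_eq_integral_cylinder (fun t r => f (t / r) * (Iic 1).indicator 1 r) hint]
  simp only [hslice, integral_integral_triangleIntegrand]
  ring

lemma integral_Ioi_sq_mul_indicator_Iic_one :
    ∫ r in Ioi (0 : ℝ), r ^ 2 * (Iic 1).indicator 1 r = 1 / 3 := by
  have h : ∀ r, r ^ 2 * (Iic (1 : ℝ)).indicator 1 r = (Iic 1).indicator (· ^ 2) r := fun r => by
    by_cases hr : r ∈ Iic (1 : ℝ) <;> simp [hr]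
  simp only [h]
  rw [integral_indicator measurableSet_Iic, Measure.restrict_restrict measurableSet_Iic,
    Iic_inter_Ioi, ← intervalIntegral.integral_of_le zero_le_one, integral_pow]
  norm_num

namespace EuclideanSpace

theorem integral_toSphere_comp_coord_two (f : ℝ →ᵇ ℝ) :
    ∫ ω : sphere (0 : ℝ³) 1, f ((ω : ℝ³) 2) ∂volume.toSphere = 2 * π * ∫ u in -1..1, f u := by
  have hpolar := (volume : Measure ℝ³).integral_comp_smul_inv_norm_mul (fun y => f (y 2))
    ((Iic 1).indicator 1)
  rw [finrank_euclideanSpace_fin, integral_Ioi_sq_mul_indicator_Iic_one] at hpolar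
  have hcyl := integral_comp_coord_div_norm_mul_indicator f
  simp only [PiLp.smul_apply, smul_eq_mul, inv_mul_eq_div] at hpolar
  linarith

end EuclideanSpace

section InnerLaw

variable {E : Type*} [NormedAddCommGroup E] [InnerProductSpace ℝ E] [MeasurableSpace E]
  [BorelSpace E]

lemma measurable_inner_sphere (v : E) : Measurable fun ω : sphere (0 : E) 1 => ⟪(ω : E), v⟫ :=
  (continuous_subtype_val.inner continuous_const).measurable

variable [FiniteDimensional ℝ E]

lemma map_inner_toSphere_eq_of_norm_eq {v w : E} (h : ‖v‖ = ‖w‖) :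
    (volume : Measure E).toSphere.map (fun ω : sphere (0 : E) 1 => ⟪(ω : E), v⟫) =
      (volume : Measure E).toSphere.map (fun ω : sphere (0 : E) 1 => ⟪(ω : E), w⟫) := by
  set e := (ℝ ∙ (v - w))ᗮ.reflection
  conv_rhs => rw [← Measure.map_restrictSphere_toSphere volume e e.measurePreserving]
  rw [Measure.map_map (measurable_inner_sphere w) e.continuous_restrictSphere.measurable]
  congr with ω
  rw [Function.comp_apply, LinearIsometryEquiv.coe_restrictSphere, ← Submodule.reflection_sub h,
    e.inner_map_map]

end InnerLaw

namespace EuclideanSpace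

theorem map_inner_toSphere {v : ℝ³} (hv : ‖v‖ = 1) :
    (volume : Measure ℝ³).toSphere.map (fun ω : sphere (0 : ℝ³) 1 => ⟪(ω : ℝ³), v⟫) =
      ENNReal.ofReal (2 * π) • volume.restrict (Ioc (-1) 1) := by
  rw [map_inner_toSphere_eq_of_norm_eq (w := single 2 1) (by simpa using hv)]
  have := (volume.restrict (Ioc (-1 : ℝ) 1)).smul_finite (c := .ofReal (2 * π))
    ENNReal.ofReal_ne_top
  refine ext_of_forall_integral_eq_of_IsFiniteMeasure fun f => ?_
  rw [integral_map (measurable_inner_sphere _).aemeasurable f.continuous.aestronglyMeasurable,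
    integral_smul_measure, ENNReal.toReal_ofReal (by positivity),
    ← intervalIntegral.integral_of_le (by norm_num)]
  simpa [inner_single_right] using integral_toSphere_comp_coord_two f

end EuclideanSpace

instance : IsProbabilityMeasure unifS2 := by
  constructor
  have hvol : (volume : Measure ℝ³).toSphere univ = ENNReal.ofReal (4 * π) := by
    rw [Measure.toSphere_apply_univ, finrank_euclideanSpace_fin,
      EuclideanSpace.volume_ball_fin_three, ENNReal.ofReal_one, one_pow, one_mul,
      ← ENNReal.ofReal_natCast, ← ENNReal.ofReal_mul (by norm_num)]
    ring_nf
  rw [unifS2, Measure.smul_apply, hvol, smul_eq_mul,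
    ENNReal.inv_mul_cancel (by simp [pi_pos]) ENNReal.ofReal_ne_top]

lemma integral_unifS2_comp_inner {v : ℝ³} (hv : ‖v‖ = 1) {g : ℝ → ℝ} (hg : Measurable g) :
    ∫ x : S2, g ⟪(x : ℝ³), v⟫ ∂unifS2 = (∫ u in -1..1, g u) / 2 := by
  rw [unifS2, integral_smul_measure, ← integral_map (measurable_inner_sphere v).aemeasurable
    hg.aestronglyMeasurable, EuclideanSpace.map_inner_toSphere hv, integral_smul_measure,
    ← intervalIntegral.integral_of_le (by norm_num), ENNReal.toReal_inv,
    ENNReal.toReal_ofReal (by positivity), ENNReal.toReal_ofReal (by positivity), smul_eq_mul,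
    smul_eq_mul]
  field_simp
  ring

lemma intervalIntegral.integral_comp_abs {g : ℝ → ℝ} (hg : Continuous g) {a : ℝ} (ha : 0 ≤ a) :
    ∫ u in -a..a, g |u| = 2 * ∫ u in 0..a, g u := by
  have hint : ∀ b c, IntervalIntegrable (fun u => g |u|) volume b c := fun b c =>
    (hg.comp continuous_abs).intervalIntegrable b c
  have hright : ∫ u in 0..a, g |u| = ∫ u in 0..a, g u :=
    intervalIntegral.integral_congr fun u hu => by
      rw [uIcc_of_le ha] at hu
      rw [abs_of_nonneg hu.1]
  have hleft : ∫ u in -a..0, g |u| = ∫ u in 0..a, g |u| := by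
    simpa using (intervalIntegral.integral_comp_neg (a := 0) (b := a) fun u => g |u|).symm
  rw [← intervalIntegral.integral_add_adjacent_intervals (hint (-a) 0) (hint 0 a), hleft, hright]
  ring

lemma integral_mul_log_from_zero (b : ℝ) :
    ∫ x in 0..b, x * log x = b ^ 2 / 2 * log b - b ^ 2 / 4 := by
  have hF : Continuous fun x => x ^ 2 / 2 * log x - x ^ 2 / 4 := by
    have hxlog : (fun x : ℝ => x ^ 2 / 2 * log x - x ^ 2 / 4) =
        fun x => x / 2 * (x * log x) - x ^ 2 / 4 := by
      ext x
      ring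
    rw [hxlog]
    fun_prop
  have hderiv : ∀ x ∈ Ioo (min 0 b) (max 0 b),
      HasDerivWithinAt (fun x => x ^ 2 / 2 * log x - x ^ 2 / 4) (x * log x) (Ioi x) x := by
    intro x hx
    have hx0 : x ≠ 0 := by
      rintro rfl
      rcases le_total 0 b with hb | hb <;> simp [hb] at hx
    refine HasDerivAt.hasDerivWithinAt ?_
    have := (((hasDerivAt_pow 2 x).div_const 2).mul (hasDerivAt_log hx0)).sub
      ((hasDerivAt_pow 2 x).div_const 4)
    exact this.congr_deriv (by field_simp; norm_num; ring)
  rw [intervalIntegral.integral_eq_sub_of_hasDeriv_right hF.continuousOn hderiv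
    (continuous_mul_log.intervalIntegrable 0 b)]
  simp

lemma integral_two_mul_abs : ∫ u in -1..1, 2 * |u| = 2 := by
  rw [intervalIntegral.integral_comp_abs (g := fun u => 2 * u) (by fun_prop) zero_le_one,
    intervalIntegral.integral_const_mul, integral_id]
  norm_num

lemma Real.continuous_mul_logb (b : ℝ) : Continuous fun x => x * logb b x := by
  simpa only [logb, mul_div_assoc] using continuous_mul_log.div_const (log b)

lemma integral_two_mul_abs_mul_logb :
    ∫ u in -1..1, 2 * |u| * logb 2 (2 * |u|) = 2 - 1 / log 2 := by
  have hlog : ∀ v, v * logb 2 v = v * log v / log 2 := fun v => by rw [logb, mul_div_assoc]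
  rw [intervalIntegral.integral_comp_abs (g := fun u => 2 * u * logb 2 (2 * u))
      ((continuous_mul_logb 2).comp (continuous_const_mul 2)) zero_le_one,
    intervalIntegral.integral_comp_mul_left (fun v => v * logb 2 v) two_ne_zero]
  simp only [hlog, intervalIntegral.integral_div, mul_zero, mul_one, integral_mul_log_from_zero]
  have : log 2 ≠ 0 := (log_pos one_lt_two).ne'
  rw [smul_eq_mul]
  field_simp
  ring

/-- let x be uniform on S² and let λ have conditional density
`|λ·x|/(2π)` with respect to the surface measure given x (equivalently, density
`2|λ·x|` with respect to the uniform probability measure `unifS2`).  Then the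
marginal of λ is uniform on the sphere (its density with respect to `unifS2` is
constantly 1), and the mutual information
`I(x:λ) = ∫∫ 2|λ·x| log₂(2|λ·x|) dσ(λ) dσ(x)` equals `1 − 1/(2 ln 2)` bits. -/
theorem stmt9 :
    (∀ l : S2, ∫ x : S2, 2 * |dotS2 x l| ∂unifS2 = 1) ∧
    ∫ x : S2, ∫ l : S2, 2 * |dotS2 x l| * Real.logb 2 (2 * |dotS2 x l|) ∂unifS2 ∂unifS2
      = 1 - 1 / (2 * Real.log 2) := by
  have hnorm : ∀ x : S2, ‖(x : ℝ³)‖ = 1 := fun x => mem_sphere_zero_iff_norm.mp x.2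
  refine ⟨fun l => ?_, ?_⟩
  · have h := integral_unifS2_comp_inner (hnorm l) (g := fun u => 2 * |u|) (by fun_prop)
    rw [integral_two_mul_abs] at h
    exact h.trans (by norm_num)
  · have hslice : ∀ x : S2,
        ∫ l : S2, 2 * |dotS2 x l| * logb 2 (2 * |dotS2 x l|) ∂unifS2 = 1 - 1 / (2 * log 2) := by
      intro x
      simp only [dotS2, real_inner_comm _ (x : ℝ³)]
      rw [integral_unifS2_comp_inner (hnorm x) (g := fun u => 2 * |u| * logb 2 (2 * |u|))
        ((continuous_mul_logb 2).comp (by fun_prop)).measurable, integral_two_mul_abs_mul_logb]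
      ring
    simp [hslice]
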